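/- Let f : ℝ^d → ℝ be twice continuously differentiable with L1-Lipschitz gradient and L2-Lipschitz Hessian. Let x ∈ ℝ^d and let v be a unit vector with vᵀ∇²f(x)v ≤ 0. Define the NCG update: if 2·|vᵀ∇²f(x)v|³/(3·L2²) > ‖∇f(x)‖²/(2·L1), set x⁺ = x − (2·|vᵀ∇²f(x)v|/L2)·sign(vᵀ∇f(x))·v; otherwise set x⁺ = x − (1/L1)·∇f(x). Then f(x) − f(x⁺) ≥ max( 2·|vᵀ∇²f(x)v|³/(3·L2²), ‖∇f(x)‖²/(2·L1) ). -/

import Mathlib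

/-!
Along a line `t ↦ x + t • u`, the Lipschitz bounds on `∇f` and `∇²f` bound the first and second
derivatives' deviation from their values at `t = 0` by `L₁‖u‖²t` and `L₂‖u‖³t`; integrating
these by the comparison principle gives the quadratic and cubic upper models
`f (x + u) ≤ f x + ⟪∇f x, u⟫ + L₁/2 ‖u‖²` and
`f (x + u) ≤ f x + ⟪∇f x, u⟫ + ½⟪∇²f x u, u⟫ + L₂/6 ‖u‖³`.
The gradient step minimises the first model. The curvature step moves a distance `r = 2|q|/L₂`
along `-sgn ⟪∇f x, v⟫ • v`, which makes the linear term nonpositive, and `r` minimises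
`r²q/2 + L₂r³/6`, with minimum `-2|q|³/(3L₂²)`, for `q = ⟪∇²f x v, v⟫ ≤ 0`. The update takes the branch whose
guaranteed decrease is the larger one.
-/

open scoped RealInnerProductSpace

noncomputable def sgn (t : ℝ) : ℝ := if 0 ≤ t then 1 else -1

open InnerProductSpace

lemma sgn_mul_self (t : ℝ) : sgn t * t = |t| := by
  unfold sgn
  split_ifs with h
  · rw [one_mul, abs_of_nonneg h]
  · rw [abs_of_neg (not_le.mp h), neg_one_mul]

lemma abs_sgn (t : ℝ) : |sgn t| = 1 := by
  unfold sgn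
  split_ifs <;> norm_num

lemma le_mul_pow_succ_div_of_hasDerivAt {φ φ' : ℝ → ℝ} {c : ℝ} (n : ℕ)
    (hφ : ∀ t, HasDerivAt φ (φ' t) t) (h0 : φ 0 = 0) (hφ' : ∀ t, 0 ≤ t → φ' t ≤ c * t ^ n)
    {t : ℝ} (ht : 0 ≤ t) : φ t ≤ c * t ^ (n + 1) / (n + 1) := by
  have hB : ∀ s : ℝ, HasDerivAt (fun s => c * s ^ (n + 1) / (n + 1)) (c * s ^ n) s := by
    intro s
    refine (((hasDerivAt_pow (n + 1) s).const_mul c).div_const ((n : ℝ) + 1)).congr_deriv ?_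
    rw [Nat.add_sub_cancel, Nat.cast_succ]
    field_simp
  exact image_le_of_deriv_right_le_deriv_boundary
    (fun s _ => (hφ s).continuousAt.continuousWithinAt) (fun s _ => (hφ s).hasDerivWithinAt)
    (by simp [h0]) (fun s _ => (hB s).continuousAt.continuousWithinAt)
    (fun s _ => (hB s).hasDerivWithinAt) (fun s hs => hφ' s hs.1) ⟨ht, le_rfl⟩

lemma norm_sub_le_of_lipschitz_add_smul {E F : Type*} [SeminormedAddCommGroup E]
    [NormedSpace ℝ E] [SeminormedAddCommGroup F] {G : E → F} {L : ℝ}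
    (hG : ∀ a b, ‖G a - G b‖ ≤ L * ‖a - b‖) (x u : E) {t : ℝ} (ht : 0 ≤ t) :
    ‖G (x + t • u) - G x‖ ≤ L * ‖u‖ * t := by
  simpa [norm_smul, abs_of_nonneg ht, mul_comm, mul_left_comm] using hG (x + t • u) x

lemma HasFDerivAt.hasDerivAt_add_smul {E F : Type*} [NormedAddCommGroup E] [NormedSpace ℝ E]
    [NormedAddCommGroup F] [NormedSpace ℝ F] {G : E → F} {G' : E →L[ℝ] F} {x u : E} {t : ℝ}
    (hG : HasFDerivAt G G' (x + t • u)) : HasDerivAt (fun s : ℝ => G (x + s • u)) (G' u) t := by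
  have hline : HasDerivAt (fun s : ℝ => x + s • u) u t := by
    simpa using ((hasDerivAt_id t).smul_const u).const_add x
  exact hG.comp_hasDerivAt t hline

variable {E : Type*} [NormedAddCommGroup E] [InnerProductSpace ℝ E] [CompleteSpace E]

open scoped Gradient

lemma ContDiff.differentiable_gradient {f : E → ℝ} {n : WithTop ℕ∞} (hf : ContDiff ℝ n f)
    (hn : 2 ≤ n) : Differentiable ℝ (∇ f) :=
  (toDual ℝ E).symm.differentiable.comp
    ((hf.fderiv_right (m := 1) hn).differentiable one_ne_zero)

lemma image_add_le_of_lipschitz_gradient {f : E → ℝ} {L : ℝ} (hf : Differentiable ℝ f)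
    (hlip : ∀ a b, ‖∇ f a - ∇ f b‖ ≤ L * ‖a - b‖) (x u : E) :
    f (x + u) ≤ f x + ⟪∇ f x, u⟫ + L / 2 * ‖u‖ ^ 2 := by
  set φ : ℝ → ℝ := fun t => f (x + t • u) - f x - t * ⟪∇ f x, u⟫
  have hφ : ∀ t, HasDerivAt φ ⟪∇ f (x + t • u) - ∇ f x, u⟫ t := fun t => by
    rw [inner_sub_left]
    exact (((hf _).hasGradientAt.hasFDerivAt.hasDerivAt_add_smul).sub_const (f x)).sub
      (hasDerivAt_mul_const _)
  have hφ' : ∀ t, 0 ≤ t → ⟪∇ f (x + t • u) - ∇ f x, u⟫ ≤ L * ‖u‖ ^ 2 * t ^ 1 := fun t ht =>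
    calc ⟪∇ f (x + t • u) - ∇ f x, u⟫ ≤ ‖∇ f (x + t • u) - ∇ f x‖ * ‖u‖ := real_inner_le_norm _ _
      _ ≤ L * ‖u‖ * t * ‖u‖ := by
        gcongr
        exact norm_sub_le_of_lipschitz_add_smul hlip x u ht
      _ = L * ‖u‖ ^ 2 * t ^ 1 := by ring
  have := le_mul_pow_succ_div_of_hasDerivAt 1 hφ (by simp [φ]) hφ' zero_le_one
  simp only [φ, one_smul, one_pow, one_mul, mul_one, Nat.cast_one] at this
  linarith

lemma image_add_le_of_lipschitz_hessian {f : E → ℝ} {L : ℝ} (hf : Differentiable ℝ f)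
    (hg : Differentiable ℝ (∇ f))
    (hlip : ∀ a b, ‖fderiv ℝ (∇ f) a - fderiv ℝ (∇ f) b‖ ≤ L * ‖a - b‖) (x u : E) :
    f (x + u) ≤ f x + ⟪∇ f x, u⟫ + 1 / 2 * ⟪fderiv ℝ (∇ f) x u, u⟫ + L / 6 * ‖u‖ ^ 3 := by
  set q := ⟪fderiv ℝ (∇ f) x u, u⟫
  set χ : ℝ → ℝ := fun t => ⟪∇ f (x + t • u), u⟫ - ⟪∇ f x, u⟫ - t * q
  have hχ : ∀ t, HasDerivAt χ ⟪(fderiv ℝ (∇ f) (x + t • u) - fderiv ℝ (∇ f) x) u, u⟫ t := by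
    intro t
    rw [sub_apply, inner_sub_left]
    exact ((((hg _).hasFDerivAt.hasDerivAt_add_smul).inner ℝ (hasDerivAt_const t u)).sub_const
      _).sub (hasDerivAt_mul_const _) |>.congr_deriv (by rw [inner_zero_right, zero_add])
  have hχ' : ∀ t, 0 ≤ t →
      ⟪(fderiv ℝ (∇ f) (x + t • u) - fderiv ℝ (∇ f) x) u, u⟫ ≤ L * ‖u‖ ^ 3 * t ^ 1 := by
    intro t ht
    calc ⟪(fderiv ℝ (∇ f) (x + t • u) - fderiv ℝ (∇ f) x) u, u⟫
        ≤ ‖fderiv ℝ (∇ f) (x + t • u) - fderiv ℝ (∇ f) x‖ * ‖u‖ * ‖u‖ :=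
          (real_inner_le_norm _ _).trans (by gcongr; exact ContinuousLinearMap.le_opNorm _ _)
      _ ≤ L * ‖u‖ * t * ‖u‖ * ‖u‖ := by
        gcongr
        exact norm_sub_le_of_lipschitz_add_smul hlip x u ht
      _ = L * ‖u‖ ^ 3 * t ^ 1 := by ring
  set φ : ℝ → ℝ := fun t => f (x + t • u) - f x - t * ⟪∇ f x, u⟫ - t ^ 2 / 2 * q
  have hφ : ∀ t, HasDerivAt φ (χ t) t := fun t => by
    refine ((((hf _).hasGradientAt.hasFDerivAt.hasDerivAt_add_smul).sub_const (f x)).sub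
      (hasDerivAt_mul_const _)).sub
      (((hasDerivAt_pow 2 t).div_const 2).mul_const q) |>.congr_deriv ?_
    simp only [χ, toDual_apply_apply]
    ring
  have hφ' : ∀ t, 0 ≤ t → χ t ≤ L * ‖u‖ ^ 3 / 2 * t ^ 2 := fun t ht => by
    have := le_mul_pow_succ_div_of_hasDerivAt 1 hχ (by simp [χ]) hχ' ht
    simp only [Nat.cast_one] at this
    linarith
  have := le_mul_pow_succ_div_of_hasDerivAt 2 hφ (by simp [φ]) hφ' zero_le_one
  simp only [φ, one_smul, one_pow, one_mul, mul_one, Nat.cast_ofNat] at this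
  linarith

lemma image_sub_inv_smul_gradient_le {f : E → ℝ} {L : ℝ} (hL : 0 < L) (hf : Differentiable ℝ f)
    (hlip : ∀ a b, ‖∇ f a - ∇ f b‖ ≤ L * ‖a - b‖) (x : E) :
    f (x - (1 / L) • ∇ f x) ≤ f x - ‖∇ f x‖ ^ 2 / (2 * L) := by
  have h := image_add_le_of_lipschitz_gradient hf hlip x (-(1 / L) • ∇ f x)
  rw [real_inner_smul_right, real_inner_self_eq_norm_sq, norm_smul, norm_neg,
    Real.norm_of_nonneg (by positivity), neg_smul, ← sub_eq_add_neg] at h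
  exact h.trans_eq (by field_simp; ring)

lemma image_sub_smul_of_nonpos_curvature_le {f : E → ℝ} {L : ℝ} (hL : 0 < L)
    (hf : Differentiable ℝ f) (hg : Differentiable ℝ (∇ f))
    (hlip : ∀ a b, ‖fderiv ℝ (∇ f) a - fderiv ℝ (∇ f) b‖ ≤ L * ‖a - b‖) (x : E) {v : E}
    (hv : ‖v‖ = 1) (hneg : ⟪fderiv ℝ (∇ f) x v, v⟫ ≤ 0) :
    f (x - (2 * |⟪fderiv ℝ (∇ f) x v, v⟫| / L * sgn ⟪∇ f x, v⟫) • v) ≤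
      f x - 2 * |⟪fderiv ℝ (∇ f) x v, v⟫| ^ 3 / (3 * L ^ 2) := by
  set q := ⟪fderiv ℝ (∇ f) x v, v⟫
  set r := 2 * |q| / L
  set s := sgn ⟪∇ f x, v⟫
  have hs : s ^ 2 = 1 := by rw [← sq_abs, abs_sgn, one_pow]
  have hgrad : ⟪∇ f x, -(r * s) • v⟫ = -(r * |⟪∇ f x, v⟫|) := by
    rw [real_inner_smul_right]
    linear_combination (-r) * sgn_mul_self ⟪∇ f x, v⟫
  have hcurv : ⟪fderiv ℝ (∇ f) x (-(r * s) • v), -(r * s) • v⟫ = r ^ 2 * q := by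
    rw [map_smul, real_inner_smul_left, real_inner_smul_right]
    linear_combination r ^ 2 * q * hs
  have hnorm : ‖-(r * s) • v‖ = r := by
    rw [norm_smul, hv, norm_neg, norm_mul, Real.norm_eq_abs s, abs_sgn,
      Real.norm_of_nonneg (by positivity), mul_one, mul_one]
  have h := image_add_le_of_lipschitz_hessian hf hg hlip x (-(r * s) • v)
  rw [hgrad, hcurv, hnorm, neg_smul, ← sub_eq_add_neg] at h
  calc _ ≤ f x - r * |⟪∇ f x, v⟫| + 1 / 2 * (r ^ 2 * q) + L / 6 * r ^ 3 := h
    _ ≤ f x + 1 / 2 * (r ^ 2 * q) + L / 6 * r ^ 3 := by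
      have : 0 ≤ r * |⟪∇ f x, v⟫| := by positivity
      linarith
    _ = f x - 2 * |q| ^ 3 / (3 * L ^ 2) := by
      simp only [r, abs_of_nonpos hneg]
      field_simp
      ring

/-- Lemma on the NCG step: the NCG update decreases the objective by at least
the maximum of the negative-curvature decrease and the gradient-descent decrease. -/
theorem NCG_step_decrease {d : ℕ}
    (f : EuclideanSpace ℝ (Fin d) → ℝ) (L1 L2 : ℝ) (hL1 : 0 < L1) (hL2 : 0 < L2)
    (hf : ContDiff ℝ 2 f)
    (hglip : ∀ a b : EuclideanSpace ℝ (Fin d),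
      ‖gradient f a - gradient f b‖ ≤ L1 * ‖a - b‖)
    (hHlip : ∀ a b : EuclideanSpace ℝ (Fin d),
      ‖fderiv ℝ (gradient f) a - fderiv ℝ (gradient f) b‖ ≤ L2 * ‖a - b‖)
    (x v : EuclideanSpace ℝ (Fin d)) (hv : ‖v‖ = 1)
    (hneg : ⟪(fderiv ℝ (gradient f) x) v, v⟫ ≤ 0)
    (xp : EuclideanSpace ℝ (Fin d))
    (hxp : xp =
      if 2 * |⟪(fderiv ℝ (gradient f) x) v, v⟫| ^ 3 / (3 * L2 ^ 2) >
          ‖gradient f x‖ ^ 2 / (2 * L1) then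
        x - ((2 * |⟪(fderiv ℝ (gradient f) x) v, v⟫| / L2) * sgn ⟪gradient f x, v⟫) • v
      else
        x - (1 / L1) • gradient f x) :
    f x - f xp ≥
      max (2 * |⟪(fderiv ℝ (gradient f) x) v, v⟫| ^ 3 / (3 * L2 ^ 2))
        (‖gradient f x‖ ^ 2 / (2 * L1)) := by
  have hfd : Differentiable ℝ f := hf.differentiable two_ne_zero
  have hgd : Differentiable ℝ (∇ f) := hf.differentiable_gradient le_rfl
  subst hxp
  split_ifs with h
  · rw [max_eq_left h.le]
    linarith [image_sub_smul_of_nonpos_curvature_le hL2 hfd hgd hHlip x hv hneg]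
  · rw [max_eq_right (not_lt.mp h)]
    linarith [image_sub_inv_smul_gradient_le hL1 hfd hglip x]
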